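/- Let N > M ≥ 1, λ > 0, σ² ≥ 0, and suppose ‖Δ‖_op = δ < 1/2 where Δ = (1/N)ΨΨᵀ − I_M for Ψ ∈ ℝ^{M×N}, and Λ = diag(λ₁,…,λ_M) with λ₁ ≥ … ≥ λ_M > 0. The variance term V := (σ²/N) Tr(B²(I_M+Δ)) with B = (I_M+Δ+λΛ⁻¹)⁻¹ satisfies V ≤ (σ²/N)(1+δ) Σ_{k=1}^M λ_k²/(λ_k+λ)² + (σ² M/N)(1+δ)δ²(5+4δ+4δ²) and V ≥ (σ²/N)(1−δ) Σ_{k=1}^M λ_k²/(λ_k+λ)² − (σ² M/N)(1+δ)δ²(5+4δ+4δ²). -/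

import Mathlib

open Matrix

set_option linter.unusedSectionVars false
set_option linter.unusedVariables false
set_option maxHeartbeats 2000000
set_option synthInstance.maxHeartbeats 1000000

noncomputable def opNorm {m n : Type*} [Fintype m] [Fintype n] [DecidableEq n]
    (A : Matrix m n ℝ) : ℝ :=
  ‖LinearMap.toContinuousLinearMap (Matrix.toEuclideanLin A)‖

noncomputable def eunorm {m : Type*} [Fintype m] (v : m → ℝ) : ℝ :=
  Real.sqrt (∑ i, v i ^ 2)

section Aux
variable {n : Type*} [Fintype n] [DecidableEq n]

lemma eunorm_eq_norm (v : n → ℝ) :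
    eunorm v = ‖(WithLp.equiv 2 (n → ℝ)).symm v‖ := by
  rw [EuclideanSpace.norm_eq]
  simp [eunorm, sq_abs]

lemma eunorm_nonneg (v : n → ℝ) : 0 ≤ eunorm v := Real.sqrt_nonneg _

lemma eunorm_sq (v : n → ℝ) : eunorm v ^ 2 = v ⬝ᵥ v := by
  rw [eunorm, Real.sq_sqrt (by positivity)]
  simp [dotProduct, pow_two]

lemma dot_self_nonneg (v : n → ℝ) : 0 ≤ v ⬝ᵥ v := by
  rw [← eunorm_sq]; positivity

lemma opNorm_nonneg (A : Matrix n n ℝ) : 0 ≤ opNorm A := norm_nonneg _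

lemma eunorm_mulVec_le (A : Matrix n n ℝ) (v : n → ℝ) :
    eunorm (A *ᵥ v) ≤ opNorm A * eunorm v := by
  have h := (LinearMap.toContinuousLinearMap (Matrix.toEuclideanLin A)).le_opNorm
      ((WithLp.equiv 2 (n → ℝ)).symm v)
  rw [eunorm_eq_norm, eunorm_eq_norm]
  simpa [opNorm] using h

lemma opNorm_le_bound (A : Matrix n n ℝ) (c : ℝ) (hc : 0 ≤ c)
    (h : ∀ v : n → ℝ, eunorm (A *ᵥ v) ≤ c * eunorm v) : opNorm A ≤ c := by
  apply ContinuousLinearMap.opNorm_le_bound _ hc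
  intro x
  have h2 := h ((WithLp.equiv 2 (n → ℝ)) x)
  rw [eunorm_eq_norm, eunorm_eq_norm] at h2
  simp at h2
  exact h2

lemma opNorm_mul_le (A B : Matrix n n ℝ) : opNorm (A * B) ≤ opNorm A * opNorm B := by
  apply opNorm_le_bound _ _ (mul_nonneg (opNorm_nonneg _) (opNorm_nonneg _))
  intro v
  rw [← Matrix.mulVec_mulVec]
  calc eunorm (A *ᵥ B *ᵥ v) ≤ opNorm A * eunorm (B *ᵥ v) := eunorm_mulVec_le _ _
    _ ≤ opNorm A * (opNorm B * eunorm v) := by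
        exact mul_le_mul_of_nonneg_left (eunorm_mulVec_le _ _) (opNorm_nonneg _)
    _ = opNorm A * opNorm B * eunorm v := by ring

lemma opNorm_mul_le' (A B : Matrix n n ℝ) (a b : ℝ) (ha : opNorm A ≤ a)
    (hb : opNorm B ≤ b) : opNorm (A * B) ≤ a * b :=
  le_trans (opNorm_mul_le A B)
    (mul_le_mul ha hb (opNorm_nonneg _) (le_trans (opNorm_nonneg _) ha))

lemma opNorm_add_le (A B : Matrix n n ℝ) : opNorm (A + B) ≤ opNorm A + opNorm B := by
  apply opNorm_le_bound _ _ (add_nonneg (opNorm_nonneg _) (opNorm_nonneg _))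
  intro v
  rw [Matrix.add_mulVec]
  have tri : eunorm (A *ᵥ v + B *ᵥ v) ≤ eunorm (A *ᵥ v) + eunorm (B *ᵥ v) := by
    rw [eunorm_eq_norm, eunorm_eq_norm, eunorm_eq_norm]
    simpa using norm_add_le ((WithLp.equiv 2 (n → ℝ)).symm (A *ᵥ v))
      ((WithLp.equiv 2 (n → ℝ)).symm (B *ᵥ v))
  calc _ ≤ eunorm (A *ᵥ v) + eunorm (B *ᵥ v) := tri
    _ ≤ opNorm A * eunorm v + opNorm B * eunorm v := by
        exact add_le_add (eunorm_mulVec_le _ _) (eunorm_mulVec_le _ _)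
    _ = (opNorm A + opNorm B) * eunorm v := by ring

lemma opNorm_one_le : opNorm (1 : Matrix n n ℝ) ≤ 1 := by
  apply opNorm_le_bound _ _ zero_le_one
  intro v
  rw [Matrix.one_mulVec, one_mul]

lemma opNorm_diagonal_le (d : n → ℝ) (c : ℝ) (hc : 0 ≤ c) (h : ∀ i, |d i| ≤ c) :
    opNorm (Matrix.diagonal d) ≤ c := by
  apply opNorm_le_bound _ _ hc
  intro v
  rw [eunorm, eunorm]
  rw [show c * Real.sqrt (∑ i, v i ^ 2) = Real.sqrt (c^2 * ∑ i, v i ^ 2) by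
    rw [Real.sqrt_mul (by positivity), Real.sqrt_sq hc]]
  apply Real.sqrt_le_sqrt
  rw [Finset.mul_sum]
  apply Finset.sum_le_sum
  intro i _
  rw [Matrix.mulVec_diagonal]
  have := h i
  have h1 : (d i)^2 ≤ c^2 := by nlinarith [abs_nonneg (d i), sq_abs (d i)]
  nlinarith [sq_nonneg (v i)]

lemma entry_abs_le (A : Matrix n n ℝ) (k : n) : |A k k| ≤ opNorm A := by
  have h1 : eunorm (A *ᵥ Pi.single k (1:ℝ)) ≤ opNorm A * eunorm (Pi.single k (1:ℝ)) :=
    eunorm_mulVec_le _ _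
  have h2 : eunorm (Pi.single k (1:ℝ)) = 1 := by
    simp [eunorm, Pi.single_apply, sq, ite_mul, Finset.sum_ite_eq']
  have h3 : |A k k| ≤ eunorm (A *ᵥ Pi.single k (1:ℝ)) := by
    rw [eunorm]
    have : |A k k| = Real.sqrt ((A *ᵥ Pi.single k (1:ℝ)) k ^ 2) := by
      rw [Real.sqrt_sq_eq_abs]
      congr 1
      simp [Matrix.mulVec_single]
    rw [this]
    apply Real.sqrt_le_sqrt
    exact Finset.single_le_sum (f := fun i => (A *ᵥ Pi.single k (1:ℝ)) i ^ 2)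
      (fun i _ => sq_nonneg _) (Finset.mem_univ k)
  calc |A k k| ≤ eunorm (A *ᵥ Pi.single k (1:ℝ)) := h3
    _ ≤ opNorm A * eunorm (Pi.single k (1:ℝ)) := h1
    _ = opNorm A := by rw [h2, mul_one]

lemma dot_abs_le (u v : n → ℝ) : |u ⬝ᵥ v| ≤ eunorm u * eunorm v := by
  have := abs_real_inner_le_norm ((WithLp.equiv 2 (n → ℝ)).symm u)
    ((WithLp.equiv 2 (n → ℝ)).symm v)
  rw [eunorm_eq_norm, eunorm_eq_norm]
  have heq : (inner ℝ ((WithLp.equiv 2 (n → ℝ)).symm u) ((WithLp.equiv 2 (n → ℝ)).symm v) : ℝ)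
      = u ⬝ᵥ v := by
    simp [dotProduct, PiLp.inner_apply, mul_comm]
  rw [← heq]; exact this

lemma quad_abs_le (A : Matrix n n ℝ) (v : n → ℝ) :
    |v ⬝ᵥ (A *ᵥ v)| ≤ opNorm A * (v ⬝ᵥ v) := by
  calc |v ⬝ᵥ (A *ᵥ v)| ≤ eunorm v * eunorm (A *ᵥ v) := dot_abs_le _ _
    _ ≤ eunorm v * (opNorm A * eunorm v) :=
        mul_le_mul_of_nonneg_left (eunorm_mulVec_le _ _) (eunorm_nonneg _)
    _ = opNorm A * eunorm v ^ 2 := by ring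
    _ = opNorm A * (v ⬝ᵥ v) := by rw [eunorm_sq]

lemma dot_mulVec_symm (Y : Matrix n n ℝ) (hY : Yᵀ = Y) (u v : n → ℝ) :
    u ⬝ᵥ (Y *ᵥ v) = v ⬝ᵥ (Y *ᵥ u) := by
  rw [Matrix.dotProduct_mulVec, ← Matrix.mulVec_transpose, hY, dotProduct_comm]

lemma symCS (Y : Matrix n n ℝ) (hY : Yᵀ = Y) (h0 : ∀ x, 0 ≤ x ⬝ᵥ (Y *ᵥ x)) (u v : n → ℝ) :
    (u ⬝ᵥ (Y *ᵥ v)) ^ 2 ≤ (u ⬝ᵥ (Y *ᵥ u)) * (v ⬝ᵥ (Y *ᵥ v)) := by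
  have key : ∀ t : ℝ, 0 ≤ (v ⬝ᵥ (Y *ᵥ v)) * (t * t) + (2 * (u ⬝ᵥ (Y *ᵥ v))) * t
      + (u ⬝ᵥ (Y *ᵥ u)) := by
    intro t
    have h := h0 (u + t • v)
    have expand : (u + t • v) ⬝ᵥ (Y *ᵥ (u + t • v)) =
        (v ⬝ᵥ (Y *ᵥ v)) * (t * t) + (2 * (u ⬝ᵥ (Y *ᵥ v))) * t + (u ⬝ᵥ (Y *ᵥ u)) := by
      rw [Matrix.mulVec_add, Matrix.mulVec_smul]
      rw [add_dotProduct, smul_dotProduct]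
      rw [dotProduct_add, dotProduct_add]
      rw [dotProduct_smul, dotProduct_smul]
      rw [dot_mulVec_symm Y hY v u]
      ring_nf
    linarith [h, expand.ge, expand.le]
  have hd := discrim_le_zero key
  rw [discrim] at hd
  nlinarith [hd]

lemma opNorm_le_of_quad (Y : Matrix n n ℝ) (hY : Yᵀ = Y) (c : ℝ) (hc : 0 ≤ c)
    (h0 : ∀ x, 0 ≤ x ⬝ᵥ (Y *ᵥ x)) (h1 : ∀ x, x ⬝ᵥ (Y *ᵥ x) ≤ c * (x ⬝ᵥ x)) :
    opNorm Y ≤ c := by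
  apply opNorm_le_bound _ _ hc
  intro x
  set y := Y *ᵥ x with hy
  have hsq : (y ⬝ᵥ y) ^ 2 ≤ c ^ 2 * (y ⬝ᵥ y) * (x ⬝ᵥ x) := by
    have h2 : y ⬝ᵥ y = y ⬝ᵥ (Y *ᵥ x) := by rw [← hy]
    have hCS := symCS Y hY h0 y x
    have hyy := h1 y
    have hxx := h1 x
    have h0y := h0 y
    have h0x := h0 x
    nlinarith [dot_self_nonneg x, dot_self_nonneg y]
  have hyy : y ⬝ᵥ y ≤ c ^ 2 * (x ⬝ᵥ x) := by
    rcases eq_or_lt_of_le (dot_self_nonneg y) with h | h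
    · nlinarith [dot_self_nonneg x]
    · nlinarith [h]
  calc eunorm y = Real.sqrt (eunorm y ^ 2) := by
        rw [Real.sqrt_sq (eunorm_nonneg _)]
    _ ≤ Real.sqrt (c ^ 2 * eunorm x ^ 2) := by
        apply Real.sqrt_le_sqrt; rw [eunorm_sq, eunorm_sq]; exact hyy
    _ = c * eunorm x := by
        rw [Real.sqrt_mul (by positivity), Real.sqrt_sq hc, Real.sqrt_sq (eunorm_nonneg _)]

lemma trace_sandwich (p : n → ℝ) (X : Matrix n n ℝ) :
    (Matrix.diagonal p * X * Matrix.diagonal p).trace = ∑ k, p k ^ 2 * X k k := by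
  rw [Matrix.trace]
  apply Finset.sum_congr rfl
  intro k _
  rw [Matrix.diag_apply, Matrix.mul_apply]
  rw [Finset.sum_eq_single k]
  · simp [Matrix.diagonal_mul, Matrix.mul_diagonal, Matrix.diagonal_apply_eq]; ring
  · intro j _ hj
    have : Matrix.diagonal p j k = 0 := Matrix.diagonal_apply_ne p hj
    simp [this]
  · simp

end Aux

theorem stmt_18 (M N : ℕ) (hM : 1 ≤ M) (hMN : M < N)
    (l : ℝ) (hl : 0 < l) (σ2 : ℝ) (hσ2 : 0 ≤ σ2)
    (lam : Fin M → ℝ) (hlam : ∀ k, 0 < lam k) (hmono : Antitone lam)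
    (Ψ : Matrix (Fin M) (Fin N) ℝ)
    (hδ : opNorm (((N : ℝ)⁻¹) • (Ψ * Ψᵀ) - 1) < 1 / 2) :
    let Δ : Matrix (Fin M) (Fin M) ℝ := ((N : ℝ)⁻¹) • (Ψ * Ψᵀ) - 1
    let δ : ℝ := opNorm Δ
    let Λ : Matrix (Fin M) (Fin M) ℝ := Matrix.diagonal lam
    let B : Matrix (Fin M) (Fin M) ℝ := (1 + Δ + l • Λ⁻¹)⁻¹
    let V : ℝ := (σ2 / N) * (B ^ 2 * (1 + Δ)).trace
    V ≤ (σ2 / N) * (1 + δ) * (∑ k, lam k ^ 2 / (lam k + l) ^ 2)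
          + (σ2 * M / N) * (1 + δ) * δ ^ 2 * (5 + 4 * δ + 4 * δ ^ 2) ∧
    V ≥ (σ2 / N) * (1 - δ) * (∑ k, lam k ^ 2 / (lam k + l) ^ 2)
          - (σ2 * M / N) * (1 + δ) * δ ^ 2 * (5 + 4 * δ + 4 * δ ^ 2) := by
  intro Δ δ Λ B V
  have hδ2 : δ < 1/2 := hδ
  have hΔop : opNorm Δ ≤ δ := le_rfl
  have hδ0 : (0:ℝ) ≤ δ := opNorm_nonneg Δ
  have hone : (0:ℝ) < 1 - δ := by linarith
  have hΔdef : Δ = ((N : ℝ)⁻¹) • (Ψ * Ψᵀ) - 1 := rfl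
  have hΔsym : Δᵀ = Δ := by
    rw [hΔdef, Matrix.transpose_sub, Matrix.transpose_smul, Matrix.transpose_one,
      Matrix.transpose_mul, Matrix.transpose_transpose]
  -- notation
  set p : Fin M → ℝ := fun k => lam k / (lam k + l) with hpdef
  have hlaml : ∀ k, 0 < lam k + l := fun k => by have := hlam k; linarith
  have hp0 : ∀ k, 0 < p k := fun k => div_pos (hlam k) (hlaml k)
  have hp1 : ∀ k, p k < 1 := fun k => by
    rw [hpdef]
    exact (div_lt_one (hlaml k)).mpr (by linarith [hlam k])
  set Pb : Matrix (Fin M) (Fin M) ℝ := Matrix.diagonal p with hPb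
  set Pbi : Matrix (Fin M) (Fin M) ℝ :=
    Matrix.diagonal (fun k => (lam k + l) / lam k) with hPbi
  have hPbPbi : Pb * Pbi = 1 := by
    rw [hPb, hPbi, Matrix.diagonal_mul_diagonal]
    have : (fun i => p i * ((lam i + l) / lam i)) = fun _ => (1:ℝ) := by
      funext i
      show lam i / (lam i + l) * ((lam i + l) / lam i) = 1
      rw [div_mul_div_comm,
        div_eq_one_iff_eq (mul_ne_zero (hlaml i).ne' (hlam i).ne')]
      ring
    rw [this, Matrix.diagonal_one]
  have hPbiPb : Pbi * Pb = 1 := by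
    rw [hPb, hPbi, Matrix.diagonal_mul_diagonal]
    have : (fun i => ((lam i + l) / lam i) * p i) = fun _ => (1:ℝ) := by
      funext i
      show (lam i + l) / lam i * (lam i / (lam i + l)) = 1
      rw [div_mul_div_comm,
        div_eq_one_iff_eq (mul_ne_zero (hlam i).ne' (hlaml i).ne')]
      ring
    rw [this, Matrix.diagonal_one]
  have hΛinv : Λ⁻¹ = Matrix.diagonal (fun k => (lam k)⁻¹) := by
    apply Matrix.inv_eq_right_inv
    show Matrix.diagonal lam * Matrix.diagonal (fun k => (lam k)⁻¹) = 1
    rw [Matrix.diagonal_mul_diagonal]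
    have : (fun i => lam i * (lam i)⁻¹) = fun _ => (1:ℝ) :=
      funext fun i => mul_inv_cancel₀ (hlam i).ne'
    rw [this, Matrix.diagonal_one]
  set A : Matrix (Fin M) (Fin M) ℝ := 1 + Δ + l • Λ⁻¹ with hA
  have hB : B = A⁻¹ := rfl
  have hAPbi : A = Pbi + Δ := by
    have h1 : (1 : Matrix (Fin M) (Fin M) ℝ) + l • Λ⁻¹ = Pbi := by
      rw [hΛinv, hPbi, ← Matrix.diagonal_one, ← Matrix.diagonal_smul, Matrix.diagonal_add]
      refine congrArg Matrix.diagonal (funext fun i => ?_)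
      have hli := (hlam i).ne'
      simp only [Pi.add_apply, Pi.smul_apply, smul_eq_mul]
      rw [eq_div_iff hli]
      field_simp
    calc A = (1 + l • Λ⁻¹) + Δ := by rw [hA]; abel
      _ = Pbi + Δ := by rw [h1]
  have hAsym : Aᵀ = A := by
    rw [hA, Matrix.transpose_add, Matrix.transpose_add, Matrix.transpose_one, hΔsym,
      Matrix.transpose_smul, hΛinv, Matrix.diagonal_transpose]
  -- quadratic positivity facts
  have hΛq : ∀ y : Fin M → ℝ, 0 ≤ y ⬝ᵥ (Λ⁻¹ *ᵥ y) := by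
    intro y
    rw [hΛinv]
    have hdg : ∀ k, (Matrix.diagonal (fun k => (lam k)⁻¹) *ᵥ y) k = (lam k)⁻¹ * y k := by
      intro k; rw [Matrix.mulVec_diagonal]
    rw [dotProduct]
    apply Finset.sum_nonneg
    intro k _
    rw [hdg k]
    have h1 := hlam k
    have h2 : 0 ≤ (lam k)⁻¹ := by positivity
    nlinarith [sq_nonneg (y k)]
  have hAq : ∀ x : Fin M → ℝ, (1 - δ) * (x ⬝ᵥ x) ≤ x ⬝ᵥ (A *ᵥ x) := by
    intro x
    rw [hA, Matrix.add_mulVec, Matrix.add_mulVec, Matrix.one_mulVec,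
      Matrix.smul_mulVec, dotProduct_add, dotProduct_add,
      dotProduct_smul]
    have h1 : |x ⬝ᵥ (Δ *ᵥ x)| ≤ δ * (x ⬝ᵥ x) :=
      le_trans (quad_abs_le Δ x) (mul_le_mul_of_nonneg_right hΔop (dot_self_nonneg x))
    have h2 := hΛq x
    have h3 := abs_le.mp h1
    have h4 : l • (x ⬝ᵥ (Λ⁻¹ *ᵥ x)) = l * (x ⬝ᵥ (Λ⁻¹ *ᵥ x)) := rfl
    rw [h4]
    nlinarith [h3.1, mul_nonneg hl.le h2]
  have hdet : IsUnit A.det := by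
    rw [isUnit_iff_ne_zero]
    intro hdet0
    obtain ⟨v, hv0, hAv⟩ := (Matrix.exists_mulVec_eq_zero_iff).mpr hdet0
    have h1 := hAq v
    rw [hAv] at h1
    have h2 : v ⬝ᵥ (0 : Fin M → ℝ) = 0 := dotProduct_zero v
    have h3 : 0 < v ⬝ᵥ v := by
      rcases eq_or_lt_of_le (dot_self_nonneg v) with h | h
      · exact absurd (dotProduct_self_eq_zero.mp h.symm) hv0
      · exact h
    nlinarith
  have hBA : B * A = 1 := by rw [hB]; exact Matrix.nonsing_inv_mul A hdet
  have hAB : A * B = 1 := by rw [hB]; exact Matrix.mul_nonsing_inv A hdet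
  have hBsym : Bᵀ = B := by
    rw [hB, Matrix.transpose_nonsing_inv, hAsym]
  set cb : ℝ := (1 - δ)⁻¹ with hcb
  have hcb0 : 0 ≤ cb := le_of_lt (inv_pos.mpr hone)
  have hcb1 : (1 - δ) * cb = 1 := mul_inv_cancel₀ hone.ne'
  have hBop : opNorm B ≤ cb := by
    apply opNorm_le_bound _ _ hcb0
    intro v
    set x := B *ᵥ v with hx
    have hAx : A *ᵥ x = v := by
      rw [hx, Matrix.mulVec_mulVec, hAB, Matrix.one_mulVec]
    have h1 : (1 - δ) * (x ⬝ᵥ x) ≤ x ⬝ᵥ v := by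
      have := hAq x; rw [hAx] at this; exact this
    have h2 : x ⬝ᵥ v ≤ eunorm x * eunorm v := le_trans (le_abs_self _) (dot_abs_le x v)
    have h3 : (1 - δ) * eunorm x ^ 2 ≤ eunorm x * eunorm v := by
      rw [eunorm_sq]; linarith
    rcases eq_or_lt_of_le (eunorm_nonneg x) with h | h
    · rw [← h]; exact mul_nonneg hcb0 (eunorm_nonneg v)
    · have h4 : (1 - δ) * eunorm x ≤ eunorm v := by nlinarith
      calc eunorm x = cb * ((1 - δ) * eunorm x) := by
            rw [← mul_assoc, mul_comm cb, hcb1, one_mul]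
        _ ≤ cb * eunorm v := mul_le_mul_of_nonneg_left h4 hcb0
  set E : Matrix (Fin M) (Fin M) ℝ := 1 + Δ with hE
  have hEsym : Eᵀ = E := by
    rw [hE, Matrix.transpose_add, Matrix.transpose_one, hΔsym]
  have hEop : opNorm E ≤ 1 + δ := by
    rw [hE]
    exact le_trans (opNorm_add_le 1 Δ) (by linarith [opNorm_one_le (n := Fin M)])
  have hPbop : opNorm Pb ≤ 1 := by
    rw [hPb]
    apply opNorm_diagonal_le _ _ zero_le_one
    intro i
    rw [abs_of_pos (hp0 i)]
    exact (hp1 i).le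
  have hEq : ∀ y : Fin M → ℝ, 0 ≤ y ⬝ᵥ (E *ᵥ y) := by
    intro y
    rw [hE, Matrix.add_mulVec, Matrix.one_mulVec, dotProduct_add]
    have h1 : |y ⬝ᵥ (Δ *ᵥ y)| ≤ δ * (y ⬝ᵥ y) :=
      le_trans (quad_abs_le Δ y) (mul_le_mul_of_nonneg_right hΔop (dot_self_nonneg y))
    have h3 := abs_le.mp h1
    nlinarith [dot_self_nonneg y, h3.1]
  have hBEB : B * E * B = B - l • (B * Λ⁻¹ * B) := by
    have e1 : B * (E + l • Λ⁻¹) * B = B := by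
      rw [← hA, mul_assoc, hAB, mul_one]
    have e2 : B * (E + l • Λ⁻¹) * B = B * E * B + l • (B * Λ⁻¹ * B) := by
      rw [mul_add, add_mul, Matrix.mul_smul, Matrix.smul_mul]
    rw [eq_sub_iff_add_eq, ← e2, e1]
  have hBEBsym : (B * E * B)ᵀ = B * E * B := by
    rw [Matrix.transpose_mul, Matrix.transpose_mul, hBsym, hEsym]
    rw [mul_assoc]
  have hBEBq0 : ∀ x : Fin M → ℝ, 0 ≤ x ⬝ᵥ ((B * E * B) *ᵥ x) := by
    intro x
    have h1 : (B * E * B) *ᵥ x = B *ᵥ (E *ᵥ (B *ᵥ x)) := by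
      rw [Matrix.mulVec_mulVec, Matrix.mulVec_mulVec]
    rw [h1, dot_mulVec_symm B hBsym x (E *ᵥ (B *ᵥ x)), dotProduct_comm]
    exact hEq (B *ᵥ x)
  have hBEBq1 : ∀ x : Fin M → ℝ, x ⬝ᵥ ((B * E * B) *ᵥ x) ≤ opNorm B * (x ⬝ᵥ x) := by
    intro x
    rw [hBEB, Matrix.sub_mulVec, Matrix.smul_mulVec, dotProduct_sub,
      dotProduct_smul]
    have h1 : x ⬝ᵥ (B *ᵥ x) ≤ opNorm B * (x ⬝ᵥ x) :=
      le_trans (le_abs_self _) (quad_abs_le B x)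
    have h2 : 0 ≤ x ⬝ᵥ ((B * Λ⁻¹ * B) *ᵥ x) := by
      have he : (B * Λ⁻¹ * B) *ᵥ x = B *ᵥ (Λ⁻¹ *ᵥ (B *ᵥ x)) := by
        rw [Matrix.mulVec_mulVec, Matrix.mulVec_mulVec]
      rw [he, dot_mulVec_symm B hBsym x (Λ⁻¹ *ᵥ (B *ᵥ x)), dotProduct_comm]
      exact hΛq (B *ᵥ x)
    have h4 : l • (x ⬝ᵥ ((B * Λ⁻¹ * B) *ᵥ x)) = l * (x ⬝ᵥ ((B * Λ⁻¹ * B) *ᵥ x)) := rfl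
    rw [h4]
    nlinarith [mul_nonneg hl.le h2]
  have hBEBop : opNorm (B * E * B) ≤ cb :=
    le_trans (opNorm_le_of_quad (B * E * B) hBEBsym (opNorm B) (opNorm_nonneg B)
      hBEBq0 hBEBq1) hBop
  -- key algebraic identities
  have k1 : Pb * Δ * B = Pb - B := by
    have h1 : Pb * A * B = Pb := by rw [mul_assoc, hAB, mul_one]
    have h2 : Pb * A * B = B + Pb * Δ * B := by
      rw [hAPbi, mul_add, add_mul, hPbPbi, one_mul]
    have h3 : B + Pb * Δ * B = Pb := by rw [← h2, h1]
    exact eq_sub_of_add_eq' h3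
  have k2 : B * Δ * Pb = Pb - B := by
    have h1 : B * A * Pb = Pb := by rw [hBA, one_mul]
    have h2 : B * A * Pb = B + B * Δ * Pb := by
      rw [hAPbi, mul_add, add_mul, mul_assoc, hPbiPb, mul_one]
    have h3 : B + B * Δ * Pb = Pb := by rw [← h2, h1]
    exact eq_sub_of_add_eq' h3
  have a4 : Pb * (E * Pb * Δ * B * Δ) * Pb
      = Pb * E * (Pb * (Δ * Pb)) - Pb * E * Pb + Pb * E * B := by
    calc Pb * (E * Pb * Δ * B * Δ) * Pb = Pb * E * ((Pb * Δ * B) * (Δ * Pb)) := by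
          noncomm_ring
      _ = Pb * E * ((Pb - B) * (Δ * Pb)) := by rw [k1]
      _ = Pb * E * (Pb * (Δ * Pb)) - Pb * E * (B * Δ * Pb) := by noncomm_ring
      _ = Pb * E * (Pb * (Δ * Pb)) - Pb * E * (Pb - B) := by rw [k2]
      _ = Pb * E * (Pb * (Δ * Pb)) - Pb * E * Pb + Pb * E * B := by noncomm_ring
  have a5 : Pb * (Δ * Pb * Δ * B * E) * Pb
      = Pb * (Δ * Pb * E) * Pb - Pb * (E * Pb) + B * (E * Pb) := by
    calc Pb * (Δ * Pb * Δ * B * E) * Pb = Pb * Δ * ((Pb * Δ * B) * (E * Pb)) := by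
          noncomm_ring
      _ = Pb * Δ * ((Pb - B) * (E * Pb)) := by rw [k1]
      _ = Pb * (Δ * Pb * E) * Pb - (Pb * Δ * B) * (E * Pb) := by noncomm_ring
      _ = Pb * (Δ * Pb * E) * Pb - (Pb - B) * (E * Pb) := by rw [k1]
      _ = Pb * (Δ * Pb * E) * Pb - Pb * (E * Pb) + B * (E * Pb) := by noncomm_ring
  have a6 : Pb * (Δ * (B * E * B) * Δ) * Pb = (Pb - B) * (E * (Pb - B)) := by
    calc Pb * (Δ * (B * E * B) * Δ) * Pb = (Pb * Δ * B) * (E * (B * Δ * Pb)) := by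
          noncomm_ring
      _ = (Pb - B) * (E * (B * Δ * Pb)) := by rw [k1]
      _ = (Pb - B) * (E * (Pb - B)) := by rw [k2]
  have main : B * E * B
      = Pb * E * Pb - Pb * (E * (Pb * Δ)) * Pb - Pb * ((Δ * Pb) * E) * Pb
        + Pb * (E * Pb * Δ * B * Δ) * Pb + Pb * (Δ * Pb * Δ * B * E) * Pb
        + Pb * (Δ * (B * E * B) * Δ) * Pb := by
    rw [a4, a5, a6]
    noncomm_ring
  -- trace computations
  have hX2 : E * (Pb * Δ) = Pb * Δ + Δ * (Pb * Δ) := by rw [hE]; noncomm_ring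
  have hX3 : (Δ * Pb) * E = Δ * Pb + (Δ * Pb) * Δ := by rw [hE]; noncomm_ring
  have ts : ∀ X : Matrix (Fin M) (Fin M) ℝ,
      (Pb * X * Pb).trace = ∑ k, p k ^ 2 * X k k := by
    intro X; rw [hPb]; exact trace_sandwich p X
  have hTr : (B * E * B).trace
      = (∑ k, p k ^ 2 * E k k) - (∑ k, p k ^ 2 * (E * (Pb * Δ)) k k)
        - (∑ k, p k ^ 2 * ((Δ * Pb) * E) k k)
        + (∑ k, p k ^ 2 * (E * Pb * Δ * B * Δ) k k)
        + (∑ k, p k ^ 2 * (Δ * Pb * Δ * B * E) k k)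
        + (∑ k, p k ^ 2 * (Δ * (B * E * B) * Δ) k k) := by
    conv_lhs => rw [main]
    rw [Matrix.trace_add, Matrix.trace_add, Matrix.trace_add, Matrix.trace_sub,
      Matrix.trace_sub, ts E, ts (E * (Pb * Δ)), ts ((Δ * Pb) * E),
      ts (E * Pb * Δ * B * Δ), ts (Δ * Pb * Δ * B * E), ts (Δ * (B * E * B) * Δ)]
  have hEkk : ∀ k, E k k = 1 + Δ k k := by
    intro k; rw [hE, Matrix.add_apply, Matrix.one_apply_eq]
  have hPbΔkk : ∀ k, (Pb * Δ) k k = p k * Δ k k := by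
    intro k; rw [hPb, Matrix.diagonal_mul]
  have hΔPbkk : ∀ k, (Δ * Pb) k k = Δ k k * p k := by
    intro k; rw [hPb, Matrix.mul_diagonal]
  -- operator norm bounds on products
  have q2 : opNorm (Δ * (Pb * Δ)) ≤ δ * (1 * δ) :=
    opNorm_mul_le' _ _ _ _ hΔop (opNorm_mul_le' _ _ _ _ hPbop hΔop)
  have q3 : opNorm ((Δ * Pb) * Δ) ≤ (δ * 1) * δ :=
    opNorm_mul_le' _ _ _ _ (opNorm_mul_le' _ _ _ _ hΔop hPbop) hΔop
  have q4 : opNorm (E * Pb * Δ * B * Δ) ≤ (((1 + δ) * 1) * δ * cb) * δ :=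
    opNorm_mul_le' _ _ _ _ (opNorm_mul_le' _ _ _ _
      (opNorm_mul_le' _ _ _ _ (opNorm_mul_le' _ _ _ _ hEop hPbop) hΔop) hBop) hΔop
  have q5 : opNorm (Δ * Pb * Δ * B * E) ≤ (((δ * 1) * δ) * cb) * (1 + δ) :=
    opNorm_mul_le' _ _ _ _ (opNorm_mul_le' _ _ _ _
      (opNorm_mul_le' _ _ _ _ (opNorm_mul_le' _ _ _ _ hΔop hPbop) hΔop) hBop) hEop
  have q6 : opNorm (Δ * (B * E * B) * Δ) ≤ (δ * cb) * δ :=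
    opNorm_mul_le' _ _ _ _ (opNorm_mul_le' _ _ _ _ hΔop hBEBop) hΔop
  set rbd : ℝ := δ * (1 * δ) + (δ * 1) * δ + (((1 + δ) * 1) * δ * cb) * δ
      + (((δ * 1) * δ) * cb) * (1 + δ) + (δ * cb) * δ with hrbd
  set F : Fin M → ℝ := fun k => (E k k - 1) - (E * (Pb * Δ)) k k - ((Δ * Pb) * E) k k
      + (E * Pb * Δ * B * Δ) k k + (Δ * Pb * Δ * B * E) k k
      + (Δ * (B * E * B) * Δ) k k with hF
  have hFk : ∀ k, |F k| ≤ δ + rbd := by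
    intro k
    have e2 : (E * (Pb * Δ)) k k = p k * Δ k k + (Δ * (Pb * Δ)) k k := by
      rw [hX2, Matrix.add_apply, hPbΔkk k]
    have e3 : ((Δ * Pb) * E) k k = Δ k k * p k + ((Δ * Pb) * Δ) k k := by
      rw [hX3, Matrix.add_apply, hΔPbkk k]
    have b1 : |Δ k k| ≤ δ := le_trans (entry_abs_le Δ k) hΔop
    have b2 : |(Δ * (Pb * Δ)) k k| ≤ δ * (1 * δ) := le_trans (entry_abs_le _ k) q2
    have b3 : |((Δ * Pb) * Δ) k k| ≤ (δ * 1) * δ := le_trans (entry_abs_le _ k) q3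
    have b4 : |(E * Pb * Δ * B * Δ) k k| ≤ (((1 + δ) * 1) * δ * cb) * δ :=
      le_trans (entry_abs_le _ k) q4
    have b5 : |(Δ * Pb * Δ * B * E) k k| ≤ (((δ * 1) * δ) * cb) * (1 + δ) :=
      le_trans (entry_abs_le _ k) q5
    have b6 : |(Δ * (B * E * B) * Δ) k k| ≤ (δ * cb) * δ := le_trans (entry_abs_le _ k) q6
    have habs1 : |(1 - 2 * p k) * Δ k k| ≤ δ := by
      rw [abs_mul]
      have h1 : |1 - 2 * p k| ≤ 1 :=
        abs_le.mpr ⟨by linarith [hp1 k], by linarith [hp0 k]⟩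
      calc |1 - 2 * p k| * |Δ k k| ≤ 1 * δ :=
            mul_le_mul h1 b1 (abs_nonneg _) zero_le_one
        _ = δ := one_mul δ
    rw [hF]
    simp only []
    rw [hEkk k, e2, e3]
    rw [show (1 + Δ k k - 1) - (p k * Δ k k + (Δ * (Pb * Δ)) k k)
        - (Δ k k * p k + ((Δ * Pb) * Δ) k k) + (E * Pb * Δ * B * Δ) k k
        + (Δ * Pb * Δ * B * E) k k + (Δ * (B * E * B) * Δ) k k
        = (1 - 2 * p k) * Δ k k - (Δ * (Pb * Δ)) k k - ((Δ * Pb) * Δ) k k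
        + (E * Pb * Δ * B * Δ) k k + (Δ * Pb * Δ * B * E) k k
        + (Δ * (B * E * B) * Δ) k k from by ring]
    have m1 := abs_le.mp habs1
    have m2 := abs_le.mp b2
    have m3 := abs_le.mp b3
    have m4 := abs_le.mp b4
    have m5 := abs_le.mp b5
    have m6 := abs_le.mp b6
    rw [hrbd]
    exact abs_le.mpr ⟨by linarith [m1.1, m2.1, m3.1, m4.1, m5.1, m6.1, m2.2, m3.2],
      by linarith [m1.2, m2.2, m3.2, m4.2, m5.2, m6.2]⟩
  set S : ℝ := ∑ k, p k ^ 2 with hS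
  have hS0 : 0 ≤ S := by
    rw [hS]; exact Finset.sum_nonneg fun k _ => sq_nonneg _
  have hSM : S ≤ (M : ℝ) := by
    rw [hS]
    calc ∑ k, p k ^ 2 ≤ ∑ _k : Fin M, (1 : ℝ) :=
          Finset.sum_le_sum (fun k _ => by nlinarith [hp0 k, hp1 k])
      _ = M := by simp
  have hTS : (B * E * B).trace - S = ∑ k, p k ^ 2 * F k := by
    rw [hTr, hS, ← Finset.sum_sub_distrib, ← Finset.sum_sub_distrib,
      ← Finset.sum_add_distrib, ← Finset.sum_add_distrib, ← Finset.sum_add_distrib,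
      ← Finset.sum_sub_distrib]
    refine Finset.sum_congr rfl fun k _ => ?_
    rw [hF]
    ring
  have hTabs : |(B * E * B).trace - S| ≤ S * (δ + rbd) := by
    rw [hTS]
    calc |∑ k, p k ^ 2 * F k| ≤ ∑ k, |p k ^ 2 * F k| := Finset.abs_sum_le_sum_abs _ _
      _ ≤ ∑ k, p k ^ 2 * (δ + rbd) := Finset.sum_le_sum (fun k _ => by
            rw [abs_mul, abs_of_nonneg (sq_nonneg (p k))]
            exact mul_le_mul_of_nonneg_left (hFk k) (sq_nonneg _))
      _ = S * (δ + rbd) := by rw [hS, ← Finset.sum_mul]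
  set KK : ℝ := (1 + δ) * δ ^ 2 * (5 + 4 * δ + 4 * δ ^ 2) with hKK
  have hδδ : 0 ≤ δ * δ := mul_nonneg hδ0 hδ0
  have h1δ : 0 ≤ 1 + δ := by linarith
  have hrbd0 : 0 ≤ rbd := by
    rw [hrbd]
    nlinarith [mul_nonneg (mul_nonneg (mul_nonneg h1δ hδ0) hcb0) hδ0,
      mul_nonneg (mul_nonneg hδδ hcb0) h1δ,
      mul_nonneg (mul_nonneg hδ0 hcb0) hδ0, hδδ]
  have hkey : rbd ≤ KK := by
    have hexp : rbd * (1 - δ) = 2 * δ ^ 2 * (1 - δ) + 2 * (1 + δ) * δ ^ 2 + δ ^ 2 := by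
      rw [hrbd, hcb]
      have hne := hone.ne'
      field_simp
      ring
    have h2 : rbd * (1 - δ) ≤ KK * (1 - δ) := by
      rw [hexp, hKK]
      nlinarith [hδ0, hδ2, sq_nonneg δ, mul_nonneg hδδ hδ0,
        mul_nonneg (mul_nonneg hδδ hδ0) hδ0, mul_nonneg (mul_nonneg (mul_nonneg hδδ hδ0) hδ0) hδ0]
    exact le_of_mul_le_mul_right h2 hone
  have hKK0 : 0 ≤ KK := le_trans hrbd0 hkey
  have hM0 : (0 : ℝ) ≤ (M : ℝ) := Nat.cast_nonneg M
  have habs2 := abs_le.mp hTabs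
  have hprod1 : S * rbd ≤ (M : ℝ) * rbd := mul_le_mul_of_nonneg_right hSM hrbd0
  have hprod2 : (M : ℝ) * rbd ≤ (M : ℝ) * KK := mul_le_mul_of_nonneg_left hkey hM0
  have hr1 : S * (δ + rbd) = S * δ + S * rbd := by ring
  have hr2 : (1 + δ) * S = S + S * δ := by ring
  have hr3 : (1 - δ) * S = S - S * δ := by ring
  have hTup : (B * E * B).trace ≤ (1 + δ) * S + (M : ℝ) * KK := by
    linarith [habs2.2]
  have hTlo : (1 - δ) * S - (M : ℝ) * KK ≤ (B * E * B).trace := by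
    linarith [habs2.1]
  -- connect to V
  have hSsum : S = ∑ k, lam k ^ 2 / (lam k + l) ^ 2 := by
    rw [hS]
    refine Finset.sum_congr rfl fun k _ => ?_
    show (lam k / (lam k + l)) ^ 2 = lam k ^ 2 / (lam k + l) ^ 2
    rw [div_pow]
  have hcyc := Matrix.trace_mul_cycle B E B
  have hVT : V = (σ2 / N) * (B * E * B).trace := by
    show (σ2 / N) * (B ^ 2 * (1 + Δ)).trace = (σ2 / N) * (B * E * B).trace
    rw [pow_two, ← hE, ← hcyc]
  have hσN : 0 ≤ σ2 / N := div_nonneg hσ2 (Nat.cast_nonneg N)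
  constructor
  · rw [hVT]
    calc (σ2 / N) * (B * E * B).trace ≤ (σ2 / N) * ((1 + δ) * S + (M : ℝ) * KK) :=
          mul_le_mul_of_nonneg_left hTup hσN
      _ = (σ2 / N) * (1 + δ) * (∑ k, lam k ^ 2 / (lam k + l) ^ 2)
            + (σ2 * M / N) * (1 + δ) * δ ^ 2 * (5 + 4 * δ + 4 * δ ^ 2) := by
          rw [← hSsum, hKK]
          ring
  · rw [ge_iff_le, hVT]
    calc (σ2 / N) * (1 - δ) * (∑ k, lam k ^ 2 / (lam k + l) ^ 2)
          - (σ2 * M / N) * (1 + δ) * δ ^ 2 * (5 + 4 * δ + 4 * δ ^ 2)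
        = (σ2 / N) * ((1 - δ) * S - (M : ℝ) * KK) := by
          rw [← hSsum, hKK]
          ring
      _ ≤ (σ2 / N) * (B * E * B).trace := mul_le_mul_of_nonneg_left hTlo hσN
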